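/- Let p(z) ∈ ℤ[z] have degree d ≥ 2 and positive leading coefficient, φ: ℕ → {−1, 1}, and k a sufficiently large positive switch (φ(k) = +1, φ(k+1) = −1). If there are t pairwise disjoint (k, s_i)-bad pairs {a_i, b_i} (i ∈ [t]), then there exist at least t distinct monochromatic solutions (x, y, z) of x + y = p(z), where (x,y,z) and (y,x,z) count as distinct. -/

import Mathlib

/-! For a bad pair `{A, B}` at a switch `k`, put `c = P k - A`, which is positive once `P` is
monotone from `k` on. If `φ c = 1` then `(A, c, k)` is a monochromatic solution; otherwise
`(B, c, k + s)` is one, since `B + c = P (k + s)` and `φ (k + s) = φ B = -1`. The first coordinate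
of the solution is `A` or `B`, so pairwise disjoint bad pairs give pairwise distinct solutions. -/

open Filter Set Polynomial

namespace Polynomial

theorem eventually_nonneg_of_leadingCoeff_nonneg {𝕜 : Type*} [NormedField 𝕜] [LinearOrder 𝕜]
    [IsStrictOrderedRing 𝕜] [OrderTopology 𝕜] {p : 𝕜[X]} (h : 0 ≤ p.leadingCoeff) :
    ∀ᶠ x in atTop, 0 ≤ p.eval x := by
  rcases le_or_gt p.degree 0 with hdeg | hdeg
  · rw [eq_C_of_degree_le_zero hdeg]
    rw [leadingCoeff, natDegree_eq_zero_iff_degree_le_zero.mpr hdeg] at h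
    exact Eventually.of_forall fun _ => by simpa using h
  · exact (tendsto_atTop_of_leadingCoeff_nonneg p hdeg h).eventually_ge_atTop 0

theorem exists_monotoneOn_Ici_of_leadingCoeff_nonneg {p : ℝ[X]} (h : 0 ≤ p.leadingCoeff) :
    ∃ x₀, MonotoneOn (fun x => p.eval x) (Ici x₀) := by
  have h' : 0 ≤ (derivative p).leadingCoeff := by
    rw [leadingCoeff_derivative]; positivity
  obtain ⟨x₀, hx₀⟩ := (eventually_nonneg_of_leadingCoeff_nonneg h').exists_forall_of_atTop
  refine ⟨x₀, monotoneOn_of_deriv_nonneg (convex_Ici x₀) p.continuousOn p.differentiableOn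
    fun x hx => ?_⟩
  rw [interior_Ici] at hx
  rw [Polynomial.deriv]
  exact hx₀ x (le_of_lt hx)

theorem exists_monotoneOn_Ici_int_of_leadingCoeff_nonneg {p : ℤ[X]} (h : 0 ≤ p.leadingCoeff) :
    ∃ N : ℕ, MonotoneOn (fun n : ℤ => p.eval n) (Ici (N : ℤ)) := by
  have hR : 0 ≤ (p.map (Int.castRingHom ℝ)).leadingCoeff := by
    rw [leadingCoeff_map_of_injective Int.cast_injective]; simpa using h
  obtain ⟨x₀, hx₀⟩ := exists_monotoneOn_Ici_of_leadingCoeff_nonneg hR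
  refine ⟨⌈x₀⌉₊, fun m hm n hn hmn => ?_⟩
  have hx₀m : ∀ {m : ℤ}, m ∈ Ici (⌈x₀⌉₊ : ℤ) → (m : ℝ) ∈ Ici x₀ := fun {m} hm =>
    (Nat.le_ceil x₀).trans (by exact_mod_cast hm)
  have := hx₀ (hx₀m hm) (hx₀m hn) (by exact_mod_cast hmn)
  simpa using this

theorem leadingCoeff_sum_range_C_mul_X_pow {R : Type*} [Semiring R] (a : ℕ → R) (d : ℕ)
    (ha : a d ≠ 0) : (∑ i ∈ Finset.range (d + 1), C (a i) * X ^ i).leadingCoeff = a d := by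
  have hcoeff : ∀ n, (∑ i ∈ Finset.range (d + 1), C (a i) * X ^ i).coeff n =
      if n < d + 1 then a n else 0 := by
    intro n
    simp [coeff_C_mul, coeff_X_pow]
  have hdeg : (∑ i ∈ Finset.range (d + 1), C (a i) * X ^ i).natDegree = d := by
    refine natDegree_eq_of_le_of_coeff_ne_zero ?_ (by simpa [hcoeff] using ha)
    refine natDegree_le_iff_coeff_eq_zero.mpr fun n hn => ?_
    have : d < n := by exact_mod_cast hn
    rw [hcoeff, if_neg (by omega)]
  rw [leadingCoeff, hdeg, hcoeff, if_pos d.lt_succ_self]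

end Polynomial

def IsMonoSolution (P φ : ℤ → ℤ) (v : ℤ × ℤ × ℤ) : Prop :=
  v.1 + v.2.1 = P v.2.2 ∧ φ v.1 = φ v.2.1 ∧ φ v.2.1 = φ v.2.2 ∧ 0 < v.1 ∧ 0 < v.2.1 ∧ 0 < v.2.2

def badPairSolution (P φ : ℤ → ℤ) (k s A B : ℤ) : ℤ × ℤ × ℤ :=
  if φ (P k - A) = 1 then (A, P k - A, k) else (B, P k - A, k + s)

theorem badPairSolution_fst_eq_or (P φ : ℤ → ℤ) (k s A B : ℤ) :
    (badPairSolution P φ k s A B).1 = A ∨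
    (badPairSolution P φ k s A B).1 = B := by
  unfold badPairSolution
  split_ifs <;> simp

theorem isMonoSolution_badPairSolution {P φ : ℤ → ℤ} {k s A B : ℤ}
    (hφ : ∀ x, φ x = 1 ∨ φ x = -1) (hk : 0 < k) (hs : 0 ≤ s) (hPk : P k ≤ P (k + s))
    (hA : 0 < A) (hB : B ≤ P k) (hBA : B = A + (P (k + s) - P k))
    (hφk : φ k = 1) (hφks : φ (k + s) = -1) (hφA : φ A = 1) (hφB : φ B = -1) :
    IsMonoSolution P φ (badPairSolution P φ k s A B) := by
  have hAB : A < B := lt_of_le_of_ne (by linarith) (ne_of_apply_ne φ (by rw [hφA, hφB]; norm_num))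
  unfold badPairSolution
  split_ifs with hc
  · exact ⟨by ring, by rw [hφA, hc], by rw [hc, hφk], hA, by linarith, hk⟩
  · have hc' : φ (P k - A) = -1 := (hφ _).resolve_left hc
    exact ⟨by rw [hBA]; ring, by rw [hφB, hc'], by rw [hc', hφks], by linarith, by linarith,
      by linarith⟩

theorem disjoint_bad_pairs_give_solutions_general (d : ℕ) (a : ℕ → ℤ) (ha : 0 < a d)
    (P : ℤ → ℤ) (hP : ∀ z, P z = ∑ i ∈ Finset.range (d + 1), a i * z ^ i)
    (φ : ℤ → ℤ) (hφ : ∀ x : ℤ, φ x = 1 ∨ φ x = -1) :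
    ∃ k₀ : ℕ, ∀ k : ℕ, k₀ ≤ k → φ k = 1 → φ ((k : ℤ) + 1) = -1 →
      ∀ t : ℕ, ∀ A B : ℕ → ℤ, ∀ s : ℕ → ℕ,
        (∀ i ∈ Finset.Icc 1 t, 1 ≤ s i ∧ 0 < A i ∧ B i ≤ P k ∧
          B i = A i + (P ((k : ℤ) + s i) - P k) ∧
          φ ((k : ℤ) + s i) = -1 ∧ φ (A i) = 1 ∧ φ (B i) = -1) →
        (∀ i ∈ Finset.Icc 1 t, ∀ j ∈ Finset.Icc 1 t, i ≠ j →
          A i ≠ A j ∧ A i ≠ B j ∧ B i ≠ A j ∧ B i ≠ B j) →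
        ∃ S : Finset (ℤ × ℤ × ℤ), t ≤ S.card ∧
          ∀ v ∈ S, v.1 + v.2.1 = P v.2.2 ∧ φ v.1 = φ v.2.1 ∧ φ v.2.1 = φ v.2.2 ∧
            0 < v.1 ∧ 0 < v.2.1 ∧ 0 < v.2.2 := by
  obtain ⟨N, hN⟩ := exists_monotoneOn_Ici_int_of_leadingCoeff_nonneg
    (p := ∑ i ∈ Finset.range (d + 1), C (a i) * X ^ i)
    (by rw [leadingCoeff_sum_range_C_mul_X_pow a d ha.ne']; exact ha.le)
  have hP' : ∀ z, P z = (∑ i ∈ Finset.range (d + 1), C (a i) * X ^ i).eval z := by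
    simp [hP, eval_finsetSum]
  refine ⟨N + 1, fun k hk hφk _ t A B s hbad hdisj => ?_⟩
  set f := fun i => badPairSolution P φ k (s i) (A i) (B i)
  refine ⟨(Finset.Icc 1 t).image f, ?_, fun v hv => ?_⟩
  · rw [Finset.card_image_of_injOn fun i hi j hj hij => ?_, Nat.card_Icc, Nat.add_sub_cancel]
    by_contra hne
    obtain ⟨h₁, h₂, h₃, h₄⟩ := hdisj i hi j hj hne
    rcases badPairSolution_fst_eq_or P φ k (s i) (A i) (B i) with hi' | hi' <;>
    rcases badPairSolution_fst_eq_or P φ k (s j) (A j) (B j) with hj' | hj' <;>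
    simp_all [f]
  · obtain ⟨i, hi, rfl⟩ := Finset.mem_image.mp hv
    obtain ⟨-, hA, hB, hBA, hφks, hφA, hφB⟩ := hbad i hi
    have hkN : (N : ℤ) ≤ k := by exact_mod_cast (Nat.le_succ N).trans hk
    refine isMonoSolution_badPairSolution hφ (by omega) (by positivity) ?_ hA hB hBA hφk hφks
      hφA hφB
    rw [hP', hP']
    exact hN hkN (hkN.trans (by omega)) (by omega)

theorem disjoint_bad_pairs_give_solutions (d : ℕ) (hd : 2 ≤ d) (a : ℕ → ℤ) (ha : 0 < a d)
    (P : ℤ → ℤ) (hP : ∀ z, P z = ∑ i ∈ Finset.range (d + 1), a i * z ^ i)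
    (φ : ℤ → ℤ) (hφ : ∀ x : ℤ, φ x = 1 ∨ φ x = -1) :
    ∃ k₀ : ℕ, ∀ k : ℕ, k₀ ≤ k → φ k = 1 → φ ((k : ℤ) + 1) = -1 →
      ∀ t : ℕ, ∀ A B : ℕ → ℤ, ∀ s : ℕ → ℕ,
        (∀ i ∈ Finset.Icc 1 t, 1 ≤ s i ∧ 0 < A i ∧ B i ≤ P k ∧
          B i = A i + (P ((k : ℤ) + s i) - P k) ∧
          φ ((k : ℤ) + s i) = -1 ∧ φ (A i) = 1 ∧ φ (B i) = -1) →
        (∀ i ∈ Finset.Icc 1 t, ∀ j ∈ Finset.Icc 1 t, i ≠ j →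
          A i ≠ A j ∧ A i ≠ B j ∧ B i ≠ A j ∧ B i ≠ B j) →
        ∃ S : Finset (ℤ × ℤ × ℤ), t ≤ S.card ∧
          ∀ v ∈ S, v.1 + v.2.1 = P v.2.2 ∧ φ v.1 = φ v.2.1 ∧ φ v.2.1 = φ v.2.2 ∧
            0 < v.1 ∧ 0 < v.2.1 ∧ 0 < v.2.2 :=
  disjoint_bad_pairs_give_solutions_general d a ha P hP φ hφ
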